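/- Let 0 ≤ γ < 1 and let Φ, Ψ be Young functions with Ψ^{−1}(t) = t^{−γ} Φ^{−1}(t) for all t > 0, and assume M_γ maps L^Φ(ℝ^n) boundedly into L^Ψ(ℝ^n) (which holds under this relation when 0 < γ < 1). Then there exist dimensional constants c_n, d_n with c_n d_n ≥ 1 and a constant c such that for every cube Q = Q(x,l) and every locally integrable f: ‖M_γ f‖_{L^Ψ_Q} ≤ c ‖f‖_{L^Φ_{2Q}} + c (1/Ψ^{−1}(1/|Q|)) sup_{t > c_n d_n l} (1/|Q(x,t)|^{1−γ}) ∫_{Q(x,t)} |f(z)| dz. -/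

import Mathlib

open MeasureTheory Set Real ENNReal Filter

noncomputable section

/-- The axis-parallel closed cube in `ℝⁿ` centered at `c` with side length `l`. -/
def cube (n : ℕ) (c : Fin n → ℝ) (l : ℝ) : Set (Fin n → ℝ) :=
  {y | ∀ i, |y i - c i| ≤ l / 2}

/-- The `ℝ≥0∞`-valued fractional maximal function `M_{γ,r} f`:
`sup_{Q ∋ x} |Q|^γ ((1/|Q|) ∫_Q |f|^r)^{1/r}`. -/
def fracMax (n : ℕ) (γ r : ℝ) (f : (Fin n → ℝ) → ℝ) (x : Fin n → ℝ) : ℝ≥0∞ :=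
  ⨆ (c : Fin n → ℝ) (l : ℝ) (_ : 0 < l) (_ : x ∈ cube n c l),
    volume (cube n c l) ^ γ *
      ((volume (cube n c l))⁻¹ * ∫⁻ y in cube n c l, ENNReal.ofReal |f y| ^ r) ^ (1 / r)

/-- The local sharp maximal function `M^♯_{0,s,Q₀} f (x)`, the supremum over
cubes `Q` with `x ∈ Q ⊆ Q₀` of `inf_c inf {α ≥ 0 : |{y ∈ Q : |f(y) - c| > α}| < s|Q|}`. -/
def localSharp (n : ℕ) (s : ℝ) (Q₀ : Set (Fin n → ℝ)) (f : (Fin n → ℝ) → ℝ)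
    (x : Fin n → ℝ) : ℝ≥0∞ :=
  ⨆ (c : Fin n → ℝ) (l : ℝ) (_ : 0 < l) (_ : x ∈ cube n c l) (_ : cube n c l ⊆ Q₀),
    ⨅ (a : ℝ), sInf {α : ℝ≥0∞ |
      volume {y ∈ cube n c l | α < ENNReal.ofReal |f y - a|} <
        ENNReal.ofReal s * volume (cube n c l)}

/-- `T` is of weak type `(r, q)`: `|{|Tf| > λ}| ≤ (C λ⁻¹ ‖f‖_{L^r})^q`. -/
def WeakType (n : ℕ) (T : ((Fin n → ℝ) → ℝ) → (Fin n → ℝ) → ℝ) (r q : ℝ) : Prop :=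
  ∃ C : ℝ, 0 < C ∧ ∀ (f : (Fin n → ℝ) → ℝ) (lam : ℝ), 0 < lam →
    volume {x | lam < |T f x|} ≤
      (ENNReal.ofReal (C / lam) * (∫⁻ y, ENNReal.ofReal |f y| ^ r) ^ (1 / r)) ^ q

/-- `cn` is a dimensional constant for which `|x-x'|/|x-y| ≤ cn 2^{-m}`
whenever `x, x' ∈ Q` and `y ∉ 2^m Q`. -/
def DimConst (n : ℕ) (cn : ℝ) : Prop :=
  0 < cn ∧ ∀ (c : Fin n → ℝ) (l : ℝ), 0 < l → ∀ m : ℕ, 1 ≤ m →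
    ∀ x x' y, x ∈ cube n c l → x' ∈ cube n c l → y ∉ cube n c (2 ^ m * l) →
      ‖x - x'‖ ≤ cn * 2 ^ (-(m : ℝ)) * ‖x - y‖

/-- Dini-type smoothness condition for the kernel `k` of a fractional type operator
of order `γ`, with modulus `ω`. -/
def DiniKernel (n : ℕ) (γ : ℝ) (k : (Fin n → ℝ) → (Fin n → ℝ) → ℝ)
    (ω : ℝ → ℝ) (cn : ℝ) : Prop :=
  (∀ ⦃s t : ℝ⦄, 0 < s → s ≤ t → ω s ≤ ω t) ∧ (∀ t, 0 < t → 0 ≤ ω t) ∧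
  IntegrableOn (fun t => ω (cn * t) / t) (Set.Ioo (0 : ℝ) 1) ∧
  ∃ C > 0, ∀ (c : Fin n → ℝ) (l : ℝ), 0 < l →
    ∀ x x' y, x ∈ cube n c l → x' ∈ cube n c l → y ∉ cube n c (2 * l) →
      |k x y - k x' y| ≤
        C * ‖x - y‖ ^ (-((n : ℝ) * (1 - γ))) * ω (‖x - x'‖ / ‖x - y‖)

/-- The (maximal) median of `g` over the cube `Q(c,l)` with parameter `t`. -/
def medianOn (n : ℕ) (g : (Fin n → ℝ) → ℝ) (t : ℝ) (c : Fin n → ℝ) (l : ℝ) : ℝ :=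
  sSup {M : ℝ | volume {y ∈ cube n c l | g y < M} ≤ ENNReal.ofReal t * volume (cube n c l)}

/-- `m♯_f(1-s, Q) = inf_a m_{|f-a|}(1-s, Q)`. -/
def sharpMedianOn (n : ℕ) (f : (Fin n → ℝ) → ℝ) (s : ℝ) (c : Fin n → ℝ) (l : ℝ) : ℝ :=
  ⨅ a : ℝ, medianOn n (fun y => |f y - a|) (1 - s) c l

/-- `Φ` satisfies condition `C`. -/
def CondC (Φ : ℝ → ℝ) : Prop :=
  Continuous Φ ∧ MonotoneOn Φ (Set.Ici 0) ∧ Φ 0 = 0 ∧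
    ∃ c > 0, ∀ t > 0, Φ (2 * t) ≤ c * Φ t

/-- A weight: nonnegative and locally integrable. -/
def IsWeight (n : ℕ) (w : (Fin n → ℝ) → ℝ) : Prop :=
  (∀ x, 0 ≤ w x) ∧ LocallyIntegrable w volume

/-- The pair of weights `(w, v)` satisfies condition `F`. -/
def CondF (n : ℕ) (w v : (Fin n → ℝ) → ℝ) : Prop :=
  ∃ c > 0, ∃ β > 0, ∃ α : ℝ, 0 < α ∧ α < 1 ∧
    ∀ (cc : Fin n → ℝ) (l : ℝ), 0 < l → ∀ E : Set (Fin n → ℝ),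
      MeasurableSet E → E ⊆ cube n cc l →
      volume E ≤ ENNReal.ofReal α * volume (cube n cc l) →
      ∫ x in E, w x ≤
        c * ((volume E).toReal / (volume (cube n cc l)).toReal) ^ β *
          ∫ x in cube n cc l \ E, v x

/-- A bounded, compactly supported, measurable function. -/
def NiceFun (n : ℕ) (f : (Fin n → ℝ) → ℝ) : Prop :=
  Measurable f ∧ HasCompactSupport f ∧ ∃ M : ℝ, ∀ x, |f x| ≤ M

/-- `m_g(t, Q₀) → 0` as the cubes `Q₀` increase to `ℝⁿ`. -/
def MedianTendstoZero (n : ℕ) (g : (Fin n → ℝ) → ℝ) (t : ℝ) : Prop :=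
  ∀ ε > 0, ∃ R > 0, ∀ (c : Fin n → ℝ) (l : ℝ), 0 < l →
    cube n (fun _ => 0) R ⊆ cube n c l → |medianOn n g t c l| < ε

/-- A Young function. -/
def IsYoung (Φ : ℝ → ℝ) : Prop :=
  ConvexOn ℝ (Set.Ici 0) Φ ∧ Continuous Φ ∧ MonotoneOn Φ (Set.Ici 0) ∧ Φ 0 = 0 ∧
  (∃ c > 0, ∀ t > 0, Φ (2 * t) ≤ c * Φ t) ∧
  Tendsto (fun t => Φ t / t) atTop atTop

/-- Generalized inverse of a Young function. -/
def youngInv (Φ : ℝ → ℝ) (t : ℝ) : ℝ :=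
  sInf {s : ℝ | 0 ≤ s ∧ t ≤ Φ s}

/-- The conjugate Young function `Ā(s) = sup_{t>0} (st - A(t))`. -/
def conjYoung (A : ℝ → ℝ) (s : ℝ) : ℝ :=
  sSup {v : ℝ | ∃ t > 0, v = s * t - A t}

/-- Unnormalized Luxemburg norm `‖f‖_{L^Φ_Q}`. -/
def luxNorm (n : ℕ) (Φ : ℝ → ℝ) (Q : Set (Fin n → ℝ)) (f : (Fin n → ℝ) → ℝ) : ℝ≥0∞ :=
  sInf {lam : ℝ≥0∞ | 0 < lam ∧
    ∫⁻ y in Q, ENNReal.ofReal (Φ (|f y| / lam.toReal)) ≤ 1}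

/-- Normalized Luxemburg average `‖f‖_{L^A(Q)}` (i.e. `(1/|Q|)∫_Q A(|f|/λ) ≤ 1`). -/
def luxAvg (n : ℕ) (A : ℝ → ℝ) (Q : Set (Fin n → ℝ)) (f : (Fin n → ℝ) → ℝ) : ℝ≥0∞ :=
  sInf {lam : ℝ≥0∞ | 0 < lam ∧
    ∫⁻ y in Q, ENNReal.ofReal (A (|f y| / lam.toReal)) ≤ volume Q}

/-- Luxemburg norm on all of `ℝⁿ`. -/
def luxNormGlobal (n : ℕ) (Φ : ℝ → ℝ) (f : (Fin n → ℝ) → ℝ) : ℝ≥0∞ :=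
  sInf {lam : ℝ≥0∞ | 0 < lam ∧
    ∫⁻ y, ENNReal.ofReal (Φ (|f y| / lam.toReal)) ≤ 1}

/-- Orlicz fractional maximal function `M_{γ,A} f(x) = sup_{Q ∋ x} |Q|^γ ‖f‖_{L^A(Q)}`. -/
def orliczMax (n : ℕ) (γ : ℝ) (A : ℝ → ℝ) (f : (Fin n → ℝ) → ℝ) (x : Fin n → ℝ) : ℝ≥0∞ :=
  ⨆ (c : Fin n → ℝ) (l : ℝ) (_ : 0 < l) (_ : x ∈ cube n c l),
    volume (cube n c l) ^ γ * luxAvg n A (cube n c l) f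

/-- Generalized Orlicz–Morrey norm `‖f‖_{𝓜^{Φ,φ}}`. -/
def morreyNorm (n : ℕ) (Φ : ℝ → ℝ) (φ : (Fin n → ℝ) → ℝ → ℝ) (f : (Fin n → ℝ) → ℝ) : ℝ≥0∞ :=
  ⨆ (x : Fin n → ℝ) (l : ℝ) (_ : 0 < l),
    ENNReal.ofReal ((1 / φ x l) * youngInv Φ (1 / (volume (cube n x l)).toReal)) *
      luxNorm n Φ (cube n x l) f

/-- Generalized Orlicz–Campanato seminorm `‖f‖_{𝓛^{Φ,φ}}`. -/
def campNorm (n : ℕ) (Φ : ℝ → ℝ) (φ : (Fin n → ℝ) → ℝ → ℝ) (f : (Fin n → ℝ) → ℝ) : ℝ≥0∞ :=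
  ⨆ (x : Fin n → ℝ) (l : ℝ) (_ : 0 < l),
    ENNReal.ofReal ((1 / φ x l) * youngInv Φ (1 / (volume (cube n x l)).toReal)) *
      ⨅ a : ℝ, luxNorm n Φ (cube n x l) (fun y => f y - a)

/-- The class `B_p` of Young functions. -/
def Bp (p : ℝ) (A : ℝ → ℝ) : Prop :=
  ∃ c > 0, IntegrableOn (fun t => A t / t ^ p / t) (Set.Ioi c)

/-- The class `B_{α,p}` of Cruz-Uribe and Moen (with `B_{0,p} = B_p`). -/
def Balphap (α p : ℝ) (A : ℝ → ℝ) : Prop :=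
  if α = 0 then Bp p A
  else ∃ c > 0,
    IntegrableOn (fun t => A t ^ ((1 / p - α)⁻¹ / p) / t ^ (1 / p - α)⁻¹ / t) (Set.Ioi c)

/-- The Riesz-potential-type integral `∫ |f(y)| |x-y|^{-n(1-γ)} dy`, valued in `ℝ≥0∞`. -/
def rieszPotential (n : ℕ) (γ : ℝ) (f : (Fin n → ℝ) → ℝ) (x : Fin n → ℝ) : ℝ≥0∞ :=
  ∫⁻ y, ENNReal.ofReal |f y| * ENNReal.ofReal (‖x - y‖ ^ (-((n : ℝ) * (1 - γ))))

end

/-!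
Split `f = f·1_{2Q} + f·1_{(2Q)ᶜ}`. The near part is handled by the assumed global
`L^Φ → L^Ψ` bound for `M_γ`. For the far part, any cube through a point of `Q = Q(x,l)` that
leaves `2Q` has side `m > l/2` and lies in `Q(x, l + 2m)`, a cube of comparable size, so on `Q`
the far part of `M_γ f` is at most `4ⁿ` times the tail supremum. A constant `b` on `Q` has
Luxemburg norm at most `b / s` whenever `Ψ(s)|Q| ≤ 1`, and `s = Ψ⁻¹(1/|Q|)/2` is such an `s`.
-/

section OrliczLocal

variable {n : ℕ}

lemma cube_eq_pi (c : Fin n → ℝ) (l : ℝ) :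
    cube n c l = univ.pi fun i => Icc (c i - l / 2) (c i + l / 2) := by
  ext y
  simp only [cube, mem_ofPred_eq, mem_univ_pi, mem_Icc, abs_le]
  refine forall_congr' fun i => ?_
  constructor <;> intro h <;> constructor <;> linarith [h.1, h.2]

lemma measurableSet_cube (c : Fin n → ℝ) (l : ℝ) : MeasurableSet (cube n c l) := by
  rw [cube_eq_pi]
  exact MeasurableSet.univ_pi fun _ => measurableSet_Icc

lemma volume_cube (c : Fin n → ℝ) {l : ℝ} (hl : 0 ≤ l) :
    volume (cube n c l) = ENNReal.ofReal (l ^ n) := by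
  rw [cube_eq_pi, volume_pi_pi]
  simp [Real.volume_Icc, ENNReal.ofReal_pow hl]

lemma volume_cube_ne_zero (c : Fin n → ℝ) {l : ℝ} (hl : 0 < l) : volume (cube n c l) ≠ 0 := by
  rw [volume_cube c hl.le]
  exact (ENNReal.ofReal_pos.mpr (pow_pos hl n)).ne'

lemma volume_cube_ne_top (c : Fin n → ℝ) {l : ℝ} (hl : 0 ≤ l) : volume (cube n c l) ≠ ⊤ := by
  rw [volume_cube c hl]
  exact ENNReal.ofReal_ne_top

lemma cube_mono (c : Fin n → ℝ) {l l' : ℝ} (h : l ≤ l') : cube n c l ⊆ cube n c l' :=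
  fun _ hy i => (hy i).trans (by linarith)

lemma cube_subset_cube_of_mem {x c z : Fin n → ℝ} {l m : ℝ} (hzx : z ∈ cube n x l)
    (hzc : z ∈ cube n c m) : cube n c m ⊆ cube n x (l + 2 * m) := by
  intro w hw i
  have h₁ := abs_le.mp (hzx i)
  have h₂ := abs_le.mp (hzc i)
  have h₃ := abs_le.mp (hw i)
  exact abs_le.mpr ⟨by linarith, by linarith⟩

lemma rpow_sub_one_le_mul_of_le_mul {a b K γ : ℝ} (ha : 0 < a) (hb : 0 < b) (hK : 1 ≤ K)
    (hba : b ≤ K * a) (hγ0 : 0 ≤ γ) (hγ1 : γ ≤ 1) : a ^ (γ - 1) ≤ K * b ^ (γ - 1) := by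
  have hK0 : 0 < K := one_pos.trans_le hK
  calc a ^ (γ - 1) ≤ K ^ γ * a ^ (γ - 1) := le_mul_of_one_le_left (by positivity)
        (Real.one_le_rpow hK hγ0)
    _ = K * (K * a) ^ (γ - 1) := by
        rw [Real.mul_rpow hK0.le ha.le, Real.rpow_sub_one hK0.ne']
        field_simp
    _ ≤ K * b ^ (γ - 1) :=
        mul_le_mul_of_nonneg_left (Real.rpow_le_rpow_of_nonpos hb hba (by linarith)) hK0.le

lemma volume_cube_rpow_mul_inv_le {γ : ℝ} (hγ0 : 0 ≤ γ) (hγ1 : γ ≤ 1) (c x : Fin n → ℝ)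
    {m t : ℝ} (hm : 0 < m) (ht : 0 < t) (htm : t ≤ 4 * m) :
    volume (cube n c m) ^ γ * (volume (cube n c m))⁻¹ ≤
      ENNReal.ofReal (4 ^ n) * volume (cube n x t) ^ (γ - 1) := by
  have hmn : 0 < m ^ n := pow_pos hm n
  have htn : 0 < t ^ n := pow_pos ht n
  rw [volume_cube c hm.le, volume_cube x ht.le, ENNReal.ofReal_rpow_of_pos hmn,
    ENNReal.ofReal_rpow_of_pos htn, ← ENNReal.ofReal_inv_of_pos hmn,
    ← ENNReal.ofReal_mul (by positivity), ← ENNReal.ofReal_mul (by positivity),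
    ← div_eq_mul_inv, ← Real.rpow_sub_one hmn.ne']
  refine ENNReal.ofReal_le_ofReal (rpow_sub_one_le_mul_of_le_mul hmn htn
    (one_le_pow₀ (by norm_num)) ?_ hγ0 hγ1)
  rw [← mul_pow]
  exact pow_le_pow_left₀ ht.le htm n

lemma lt_of_lt_youngInv {Ψ : ℝ → ℝ} {s τ : ℝ} (hs : 0 ≤ s) (h : s < youngInv Ψ τ) : Ψ s < τ := by
  by_contra! hτ
  exact h.not_ge (csInf_le ⟨0, fun _ hr => hr.1⟩ ⟨hs, hτ⟩)

lemma youngInv_pos {Ψ : ℝ → ℝ} (hcont : ContinuousAt Ψ 0) (h0 : Ψ 0 = 0)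
    (htend : Tendsto (fun t => Ψ t / t) atTop atTop) {τ : ℝ} (hτ : 0 < τ) :
    0 < youngInv Ψ τ := by
  obtain ⟨t, ht, ht1⟩ := ((htend.eventually_ge_atTop τ).and (eventually_ge_atTop 1)).exists
  have hΨt : 0 < Ψ t := (div_pos_iff_of_pos_right (by linarith)).mp (hτ.trans_le ht)
  have hne : {s : ℝ | 0 ≤ s ∧ τ ≤ Ψ s}.Nonempty :=
    ⟨t, by linarith, ht.trans (div_le_self hΨt.le ht1)⟩
  have hsmall : ∀ᶠ s in nhds (0 : ℝ), Ψ s < τ := by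
    rw [← h0] at hτ
    exact hcont.eventually_lt_const hτ
  obtain ⟨ε, hε, hball⟩ := Metric.eventually_nhds_iff.mp hsmall
  refine hε.trans_le (le_csInf hne fun s ⟨hs, hτs⟩ => ?_)
  by_contra! hsε
  exact (hball (by rwa [Real.dist_0_eq_abs, abs_of_nonneg hs])).not_ge hτs

lemma luxNorm_le_luxNormGlobal (Φ : ℝ → ℝ) (Q : Set (Fin n → ℝ)) (f : (Fin n → ℝ) → ℝ) :
    luxNorm n Φ Q f ≤ luxNormGlobal n Φ f :=
  sInf_le_sInf fun _ hlam => ⟨hlam.1, (setLIntegral_le_lintegral _ _).trans hlam.2⟩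

lemma luxNormGlobal_indicator {Φ : ℝ → ℝ} (h0 : Φ 0 = 0) {Q : Set (Fin n → ℝ)}
    (hQ : MeasurableSet Q) (f : (Fin n → ℝ) → ℝ) :
    luxNormGlobal n Φ (Q.indicator f) = luxNorm n Φ Q f := by
  have key : ∀ lam : ℝ, ∫⁻ y, ENNReal.ofReal (Φ (|Q.indicator f y| / lam)) =
      ∫⁻ y in Q, ENNReal.ofReal (Φ (|f y| / lam)) := fun lam => by
    rw [← lintegral_indicator hQ]
    congr 1 with y
    by_cases hy : y ∈ Q <;> simp [hy, h0]
  simp only [luxNormGlobal, luxNorm, key]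

lemma luxNorm_mono {Φ : ℝ → ℝ} (hmono : MonotoneOn Φ (Ici 0)) {Q : Set (Fin n → ℝ)}
    (hQ : MeasurableSet Q) {f g : (Fin n → ℝ) → ℝ} (h : ∀ y ∈ Q, |f y| ≤ |g y|) :
    luxNorm n Φ Q f ≤ luxNorm n Φ Q g :=
  sInf_le_sInf fun _ ⟨hpos, hint⟩ => ⟨hpos, le_trans (setLIntegral_mono' hQ fun y hy =>
    ENNReal.ofReal_le_ofReal (hmono (mem_Ici.mpr (by positivity)) (mem_Ici.mpr (by positivity))
      (div_le_div_of_nonneg_right (h y hy) ENNReal.toReal_nonneg))) hint⟩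

lemma luxNorm_le_add_of_forall {Φ : ℝ → ℝ} {Q : Set (Fin n → ℝ)} {g g₁ : (Fin n → ℝ) → ℝ}
    {t : ℝ} (ht : 0 ≤ t)
    (h : ∀ p : ℝ, 0 < p → ∫⁻ y in Q, ENNReal.ofReal (Φ (|g₁ y| / p)) ≤ 1 →
      ∫⁻ y in Q, ENNReal.ofReal (Φ (|g y| / (p + t))) ≤ 1) :
    luxNorm n Φ Q g ≤ luxNorm n Φ Q g₁ + ENNReal.ofReal t := by
  conv_rhs => rw [luxNorm]
  rw [ENNReal.sInf_add]
  refine le_iInf₂ fun lam ⟨hlpos, hlint⟩ => ?_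
  rcases eq_or_ne lam ⊤ with rfl | hne
  · simp
  refine sInf_le ⟨hlpos.trans_le le_self_add, ?_⟩
  rw [ENNReal.toReal_add hne ENNReal.ofReal_ne_top, ENNReal.toReal_ofReal ht]
  exact h _ (ENNReal.toReal_pos hlpos.ne' hne) hlint

lemma ConvexOn.apply_add_div_add_le {Ψ : ℝ → ℝ} (hΨ : ConvexOn ℝ (Ici 0) Ψ) {a b p q : ℝ}
    (ha : 0 ≤ a) (hb : 0 ≤ b) (hp : 0 < p) (hq : 0 < q) :
    Ψ ((a + b) / (p + q)) ≤ p / (p + q) * Ψ (a / p) + q / (p + q) * Ψ (b / q) := by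
  have h := hΨ.2 (mem_Ici.mpr (div_nonneg ha hp.le)) (mem_Ici.mpr (div_nonneg hb hq.le))
    (div_nonneg hp.le (by positivity)) (div_nonneg hq.le (by positivity))
    (by field_simp : p / (p + q) + q / (p + q) = 1)
  simp only [smul_eq_mul] at h
  have hcomb : (a + b) / (p + q) = p / (p + q) * (a / p) + q / (p + q) * (b / q) := by
    field_simp
  rwa [hcomb]

lemma luxNorm_le_add_of_le_add_const {Ψ : ℝ → ℝ} (hconv : ConvexOn ℝ (Ici 0) Ψ)
    (hmono : MonotoneOn Ψ (Ici 0)) (h0 : Ψ 0 = 0) {Q : Set (Fin n → ℝ)} (hQ : MeasurableSet Q)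
    {g g₁ : (Fin n → ℝ) → ℝ} (hg₁ : ∀ z, 0 ≤ g₁ z) {b s : ℝ} (hb : 0 ≤ b) (hs : 0 < s)
    (hgb : ∀ z ∈ Q, |g z| ≤ g₁ z + b) (hΨs : ENNReal.ofReal (Ψ s) * volume Q ≤ 1) :
    luxNorm n Ψ Q g ≤ luxNorm n Ψ Q g₁ + ENNReal.ofReal (b / s) := by
  rcases hb.eq_or_lt with rfl | hb
  · simp only [zero_div, ENNReal.ofReal_zero, add_zero]
    exact luxNorm_mono hmono hQ fun z hz => by simpa [abs_of_nonneg (hg₁ z)] using hgb z hz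
  set t := b / s
  have ht : 0 < t := div_pos hb hs
  refine luxNorm_le_add_of_forall ht.le fun p hp hlint => ?_
  have hΨ0 : ∀ r, 0 ≤ r → 0 ≤ Ψ r := fun r hr => h0 ▸ hmono (mem_Ici.mpr le_rfl) hr hr
  have hpt : ∀ z ∈ Q, ENNReal.ofReal (Ψ (|g z| / (p + t))) ≤
      ENNReal.ofReal (p / (p + t)) * ENNReal.ofReal (Ψ (|g₁ z| / p)) +
        ENNReal.ofReal (t / (p + t)) * ENNReal.ofReal (Ψ s) := fun z hz => by
    have hbt : b / t = s := by simp only [t]; field_simp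
    have hconvz := hconv.apply_add_div_add_le (hg₁ z) hb.le hp ht
    rw [hbt] at hconvz
    rw [abs_of_nonneg (hg₁ z), ← ENNReal.ofReal_mul (by positivity),
      ← ENNReal.ofReal_mul (by positivity), ← ENNReal.ofReal_add
        (mul_nonneg (by positivity) (hΨ0 _ (div_nonneg (hg₁ z) hp.le))) (mul_nonneg (by positivity)
        (hΨ0 _ hs.le))]
    refine ENNReal.ofReal_le_ofReal (le_trans (hmono (mem_Ici.mpr (by positivity)) ?_ ?_) hconvz)
    · exact mem_Ici.mpr (div_nonneg (add_nonneg (hg₁ z) hb.le) (by positivity))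
    · exact div_le_div_of_nonneg_right (hgb z hz) (by positivity)
  calc ∫⁻ z in Q, ENNReal.ofReal (Ψ (|g z| / (p + t)))
      ≤ ∫⁻ z in Q, (ENNReal.ofReal (p / (p + t)) * ENNReal.ofReal (Ψ (|g₁ z| / p)) +
          ENNReal.ofReal (t / (p + t)) * ENNReal.ofReal (Ψ s)) := setLIntegral_mono' hQ hpt
    _ = ENNReal.ofReal (p / (p + t)) * (∫⁻ z in Q, ENNReal.ofReal (Ψ (|g₁ z| / p))) +
          ENNReal.ofReal (t / (p + t)) * (ENNReal.ofReal (Ψ s) * volume Q) := by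
        rw [lintegral_add_right _ measurable_const, lintegral_const_mul' _ _ ENNReal.ofReal_ne_top,
          lintegral_const, Measure.restrict_apply_univ, mul_assoc]
    _ ≤ ENNReal.ofReal (p / (p + t)) * 1 + ENNReal.ofReal (t / (p + t)) * 1 := by gcongr
    _ = 1 := by
        rw [mul_one, mul_one, ← ENNReal.ofReal_add (by positivity) (by positivity), ← add_div,
          div_self (by positivity), ENNReal.ofReal_one]

lemma le_fracMax_one {γ : ℝ} {f : (Fin n → ℝ) → ℝ} {z c : Fin n → ℝ} {l : ℝ} (hl : 0 < l)
    (hz : z ∈ cube n c l) :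
    volume (cube n c l) ^ γ *
        ((volume (cube n c l))⁻¹ * ∫⁻ y in cube n c l, ENNReal.ofReal |f y|) ≤
      fracMax n γ 1 f z := by
  refine le_iSup_of_le c (le_iSup_of_le l (le_iSup_of_le hl (le_iSup_of_le hz ?_)))
  simp only [ENNReal.rpow_one, div_one, le_refl]

lemma fracMax_one_le {γ : ℝ} {f : (Fin n → ℝ) → ℝ} {z : Fin n → ℝ} {B : ℝ≥0∞}
    (h : ∀ c l, 0 < l → z ∈ cube n c l → volume (cube n c l) ^ γ *
        ((volume (cube n c l))⁻¹ * ∫⁻ y in cube n c l, ENNReal.ofReal |f y|) ≤ B) :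
    fracMax n γ 1 f z ≤ B :=
  iSup_le fun c => iSup_le fun l => iSup_le fun hl => iSup_le fun hz => by
    simpa only [ENNReal.rpow_one, div_one] using h c l hl hz

lemma fracMax_mono {γ : ℝ} {f g : (Fin n → ℝ) → ℝ} (h : ∀ y, |f y| ≤ |g y|) (z : Fin n → ℝ) :
    fracMax n γ 1 f z ≤ fracMax n γ 1 g z :=
  fracMax_one_le fun _ _ hl hz => (le_fracMax_one hl hz).trans' <|
    mul_le_mul_right (mul_le_mul_right (lintegral_mono fun y => ENNReal.ofReal_le_ofReal (h y)) _) _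

lemma fracMax_le_add {γ : ℝ} {f f₁ f₂ : (Fin n → ℝ) → ℝ} (h : ∀ y, |f y| ≤ |f₁ y| + |f₂ y|)
    (hf₁ : AEMeasurable f₁) (z : Fin n → ℝ) :
    fracMax n γ 1 f z ≤ fracMax n γ 1 f₁ z + fracMax n γ 1 f₂ z := by
  refine fracMax_one_le fun c l hl hz => ?_
  refine le_trans ?_ (add_le_add (le_fracMax_one hl hz) (le_fracMax_one hl hz))
  rw [← mul_add, ← mul_add, ← lintegral_add_left' (by fun_prop)]
  gcongr with y
  rw [← ENNReal.ofReal_add (abs_nonneg _) (abs_nonneg _)]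
  exact ENNReal.ofReal_le_ofReal (h y)

noncomputable def tailAverage (n : ℕ) (γ : ℝ) (f : (Fin n → ℝ) → ℝ) (x : Fin n → ℝ) (l : ℝ) :
    ℝ≥0∞ :=
  ⨆ (t : ℝ) (_ : l < t), volume (cube n x t) ^ (γ - 1) * ∫⁻ z in cube n x t, ENNReal.ofReal |f z|

lemma fracMax_indicator_compl_le_tailAverage {γ : ℝ} (hγ0 : 0 ≤ γ) (hγ1 : γ ≤ 1)
    {x z : Fin n → ℝ} {l : ℝ} (hl : 0 < l) (hz : z ∈ cube n x l) (f : (Fin n → ℝ) → ℝ) :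
    fracMax n γ 1 ((cube n x (2 * l))ᶜ.indicator f) z ≤
      ENNReal.ofReal (4 ^ n) * tailAverage n γ f x l := by
  refine fracMax_one_le fun c m hm hzc => ?_
  by_cases hsub : cube n c m ⊆ cube n x (2 * l)
  · rw [setLIntegral_eq_zero (measurableSet_cube c m) fun y hy => by simp [hsub hy]]
    simp
  have hlm : l < 2 * m := by
    by_contra! h
    exact hsub ((cube_subset_cube_of_mem hz hzc).trans (cube_mono x (by linarith)))
  have hint : ∫⁻ y in cube n c m, ENNReal.ofReal |(cube n x (2 * l))ᶜ.indicator f y| ≤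
      ∫⁻ y in cube n x (l + 2 * m), ENNReal.ofReal |f y| := by
    refine lintegral_mono' (Measure.restrict_mono (cube_subset_cube_of_mem hz hzc) le_rfl)
      fun y => ENNReal.ofReal_le_ofReal ?_
    simpa only [Real.norm_eq_abs] using norm_indicator_le_norm_self f y
  calc volume (cube n c m) ^ γ * ((volume (cube n c m))⁻¹ *
        ∫⁻ y in cube n c m, ENNReal.ofReal |(cube n x (2 * l))ᶜ.indicator f y|)
      ≤ ENNReal.ofReal (4 ^ n) * volume (cube n x (l + 2 * m)) ^ (γ - 1) *
          ∫⁻ y in cube n x (l + 2 * m), ENNReal.ofReal |f y| := by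
        rw [← mul_assoc]
        exact mul_le_mul' (volume_cube_rpow_mul_inv_le hγ0 hγ1 c x hm (by linarith)
          (by linarith)) hint
    _ ≤ ENNReal.ofReal (4 ^ n) * tailAverage n γ f x l := by
        rw [mul_assoc, tailAverage]
        gcongr
        exact le_iSup₂_of_le (l + 2 * m) (show l < l + 2 * m by linarith) le_rfl

lemma fracMax_toReal_le_indicator_add_tailAverage {γ : ℝ} (hγ0 : 0 ≤ γ) (hγ1 : γ ≤ 1)
    {x z : Fin n → ℝ} {l : ℝ} (hl : 0 < l) (hz : z ∈ cube n x l) {f : (Fin n → ℝ) → ℝ}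
    (hf : AEMeasurable f) (hS : tailAverage n γ f x l ≠ ⊤) :
    (fracMax n γ 1 f z).toReal ≤ (fracMax n γ 1 ((cube n x (2 * l)).indicator f) z).toReal +
      (ENNReal.ofReal (4 ^ n) * tailAverage n γ f x l).toReal := by
  set Q₂ := cube n x (2 * l)
  have hsplit : fracMax n γ 1 f z ≤ fracMax n γ 1 (Q₂.indicator f) z +
      ENNReal.ofReal (4 ^ n) * tailAverage n γ f x l := by
    refine (fracMax_le_add (f₂ := Q₂ᶜ.indicator f) (fun y => ?_)
      (hf.indicator (measurableSet_cube x (2 * l))) z).trans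
      (add_le_add le_rfl (fracMax_indicator_compl_le_tailAverage hγ0 hγ1 hl hz f))
    simpa only [indicator_self_add_compl_apply] using
      abs_add_le (Q₂.indicator f y) (Q₂ᶜ.indicator f y)
  have hnear : fracMax n γ 1 (Q₂.indicator f) z ≤ fracMax n γ 1 f z :=
    fracMax_mono (fun y => by simpa only [Real.norm_eq_abs] using norm_indicator_le_norm_self f y) z
  exact ENNReal.toReal_le_add' hsplit (fun h => top_unique (h ▸ hnear))
    (fun h => absurd h (ENNReal.mul_ne_top ENNReal.ofReal_ne_top hS))

lemma ofReal_mul_volume_le_one_of_lt_youngInv {Ψ : ℝ → ℝ} {Q : Set (Fin n → ℝ)}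
    (hQ0 : volume Q ≠ 0) (hQ : volume Q ≠ ⊤) {s : ℝ} (hs : 0 ≤ s)
    (h : s < youngInv Ψ (1 / (volume Q).toReal)) : ENNReal.ofReal (Ψ s) * volume Q ≤ 1 := by
  have hV : 0 < (volume Q).toReal := ENNReal.toReal_pos hQ0 hQ
  have hlt : Ψ s * (volume Q).toReal < 1 := (lt_div_iff₀ hV).mp (lt_of_lt_youngInv hs h)
  rw [← ENNReal.ofReal_toReal hQ, ← ENNReal.ofReal_mul' hV.le]
  exact ENNReal.ofReal_le_one.mpr hlt.le

lemma luxNorm_le_add_div_youngInv {Ψ : ℝ → ℝ} (hΨ : IsYoung Ψ) {Q : Set (Fin n → ℝ)}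
    (hQm : MeasurableSet Q) (hQ0 : volume Q ≠ 0) (hQ : volume Q ≠ ⊤)
    {g g₁ : (Fin n → ℝ) → ℝ} (hg₁ : ∀ z, 0 ≤ g₁ z) {b : ℝ≥0∞} (hb : b ≠ ⊤)
    (hgb : ∀ z ∈ Q, |g z| ≤ g₁ z + b.toReal) :
    luxNorm n Ψ Q g ≤
      luxNorm n Ψ Q g₁ + ENNReal.ofReal (2 / youngInv Ψ (1 / (volume Q).toReal)) * b := by
  obtain ⟨hconv, hcont, hmono, h0, -, htend⟩ := hΨ
  set u := youngInv Ψ (1 / (volume Q).toReal)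
  have hu : 0 < u := youngInv_pos hcont.continuousAt h0 htend
    (one_div_pos.mpr (ENNReal.toReal_pos hQ0 hQ))
  have hbu : ENNReal.ofReal (b.toReal / (u / 2)) = ENNReal.ofReal (2 / u) * b := by
    rw [← ENNReal.ofReal_toReal hb, ← ENNReal.ofReal_mul (by positivity),
      ENNReal.toReal_ofReal ENNReal.toReal_nonneg]
    congr 1
    field_simp
  rw [← hbu]
  exact luxNorm_le_add_of_le_add_const hconv hmono h0 hQm hg₁ ENNReal.toReal_nonneg
    (half_pos hu) hgb (ofReal_mul_volume_le_one_of_lt_youngInv hQ0 hQ (half_pos hu).le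
      (half_lt_self hu))

end OrliczLocal

theorem orlicz_local_estimate_fracMax_i_general
    (n : ℕ) (γ : ℝ) (hγ0 : 0 ≤ γ) (hγ1 : γ < 1)
    (Φ Ψ : ℝ → ℝ) (hΦ : IsYoung Φ) (hΨ : IsYoung Ψ)
    (hbdd : ∃ C : ℝ, 0 < C ∧ ∀ f : (Fin n → ℝ) → ℝ,
      luxNormGlobal n Ψ (fun x => (fracMax n γ 1 f x).toReal) ≤
        ENNReal.ofReal C * luxNormGlobal n Φ f) :
    ∃ cn dn : ℝ, 0 < cn ∧ 0 < dn ∧ 1 ≤ cn * dn ∧ ∃ c : ℝ, 0 < c ∧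
      ∀ (x : Fin n → ℝ) (l : ℝ), 0 < l →
        ∀ f : (Fin n → ℝ) → ℝ, LocallyIntegrable f volume →
          luxNorm n Ψ (cube n x l) (fun z => (fracMax n γ 1 f z).toReal) ≤
            ENNReal.ofReal c * luxNorm n Φ (cube n x (2 * l)) f +
              ENNReal.ofReal
                  (c * (1 / youngInv Ψ (1 / (volume (cube n x l)).toReal))) *
                ⨆ (t : ℝ) (_ : cn * dn * l < t),
                  volume (cube n x t) ^ (γ - 1) *
                    ∫⁻ z in cube n x t, ENNReal.ofReal |f z| := by
  obtain ⟨C, hC, hM⟩ := hbdd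
  refine ⟨1, 1, one_pos, one_pos, (one_mul 1).ge, C + 2 * 4 ^ n, by positivity,
    fun x l hl f hf => ?_⟩
  simp only [one_mul]
  change _ ≤ _ + _ * tailAverage n γ f x l
  set Q₂ := cube n x (2 * l)
  set S := tailAverage n γ f x l
  set u := youngInv Ψ (1 / (volume (cube n x l)).toReal)
  have hu : 0 < u := youngInv_pos hΨ.2.1.continuousAt hΨ.2.2.2.1 hΨ.2.2.2.2.2
    (one_div_pos.mpr (ENNReal.toReal_pos (volume_cube_ne_zero x hl) (volume_cube_ne_top x hl.le)))
  rcases eq_or_ne S ⊤ with hS | hS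
  · rw [hS, ENNReal.mul_top (by positivity), add_top]
    exact le_top
  have hnear : luxNorm n Ψ (cube n x l) (fun z => (fracMax n γ 1 (Q₂.indicator f) z).toReal) ≤
      ENNReal.ofReal C * luxNorm n Φ Q₂ f := by
    rw [← luxNormGlobal_indicator hΦ.2.2.2.1 (measurableSet_cube x (2 * l))]
    exact (luxNorm_le_luxNormGlobal _ _ _).trans (hM _)
  have hcoef : 2 / u * 4 ^ n ≤ (C + 2 * 4 ^ n) * (1 / u) := by
    rw [div_mul_eq_mul_div, mul_one_div]
    gcongr
    linarith
  calc luxNorm n Ψ (cube n x l) (fun z => (fracMax n γ 1 f z).toReal)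
      ≤ luxNorm n Ψ (cube n x l) (fun z => (fracMax n γ 1 (Q₂.indicator f) z).toReal) +
          ENNReal.ofReal (2 / u) * (ENNReal.ofReal (4 ^ n) * S) :=
        luxNorm_le_add_div_youngInv hΨ (measurableSet_cube x l) (volume_cube_ne_zero x hl)
          (volume_cube_ne_top x hl.le) (fun _ => ENNReal.toReal_nonneg)
          (ENNReal.mul_ne_top ENNReal.ofReal_ne_top hS)
          fun z hz => (abs_of_nonneg ENNReal.toReal_nonneg).trans_le
            (fracMax_toReal_le_indicator_add_tailAverage hγ0 hγ1.le hl hz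
              hf.aestronglyMeasurable.aemeasurable hS)
    _ ≤ _ := by
      rw [← mul_assoc, ← ENNReal.ofReal_mul (by positivity)]
      exact add_le_add (hnear.trans (by gcongr; exact le_add_of_nonneg_right (by positivity)))
        (mul_le_mul_left (ENNReal.ofReal_le_ofReal hcoef) _)

/-- Proposition 5.1 (i): `‖M_γ f‖_{L^Ψ_Q} ≤ c ‖f‖_{L^Φ_{2Q}} +
c (1/Ψ⁻¹(1/|Q|)) sup_{t > cₙdₙ l} (1/|Q(x,t)|^{1-γ}) ∫_{Q(x,t)} |f|`. -/
theorem orlicz_local_estimate_fracMax_i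
    (n : ℕ) (hn : 1 ≤ n) (γ : ℝ) (hγ0 : 0 ≤ γ) (hγ1 : γ < 1)
    (Φ Ψ : ℝ → ℝ) (hΦ : IsYoung Φ) (hΨ : IsYoung Ψ)
    (hinv : ∀ t : ℝ, 0 < t → youngInv Ψ t = t ^ (-γ) * youngInv Φ t)
    (hbdd : ∃ C : ℝ, 0 < C ∧ ∀ f : (Fin n → ℝ) → ℝ,
      luxNormGlobal n Ψ (fun x => (fracMax n γ 1 f x).toReal) ≤
        ENNReal.ofReal C * luxNormGlobal n Φ f) :
    ∃ cn dn : ℝ, 0 < cn ∧ 0 < dn ∧ 1 ≤ cn * dn ∧ ∃ c : ℝ, 0 < c ∧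
      ∀ (x : Fin n → ℝ) (l : ℝ), 0 < l →
        ∀ f : (Fin n → ℝ) → ℝ, LocallyIntegrable f volume →
          luxNorm n Ψ (cube n x l) (fun z => (fracMax n γ 1 f z).toReal) ≤
            ENNReal.ofReal c * luxNorm n Φ (cube n x (2 * l)) f +
              ENNReal.ofReal
                  (c * (1 / youngInv Ψ (1 / (volume (cube n x l)).toReal))) *
                ⨆ (t : ℝ) (_ : cn * dn * l < t),
                  volume (cube n x t) ^ (γ - 1) *
                    ∫⁻ z in cube n x t, ENNReal.ofReal |f z| :=
  orlicz_local_estimate_fracMax_i_general n γ hγ0 hγ1 Φ Ψ hΦ hΨ hbdd
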